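/- For the energy harvesting multiple access channel with infinite batteries and α_1, α_2 ∈ [0,1]: the supremum of the sum-throughput Σ_{i=1}^{N} (1/2)·log(1 + (h_1/σ_2²) p_{1,i} + (h_2/σ_1²) p_{2,i}) over all feasible policies equals its supremum over all feasible procrastinating policies. -/
import Mathlib

lemma macSum (f g h k : ℕ → ℝ) (c : ℝ) (m : ℕ) :
    ∑ n ∈ Finset.range m, (f n - g n + c * h n - k n)
      = (∑ n ∈ Finset.range m, f n) - (∑ n ∈ Finset.range m, g n)
        + c * (∑ n ∈ Finset.range m, h n) - (∑ n ∈ Finset.range m, k n) := by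
  simp [Finset.sum_add_distrib, Finset.sum_sub_distrib, Finset.mul_sum]

noncomputable def macC (p1 p2 E1 E2 : ℕ → ℝ) (a1 a2 : ℝ) : ℕ → ℝ × ℝ
  | 0 => (0, 0)
  | (i+1) =>
      ((macC p1 p2 E1 E2 a1 a2 i).1 +
        (if 0 < (∑ n ∈ Finset.range (i+1), p2 n) + (macC p1 p2 E1 E2 a1 a2 i).2
              - (∑ n ∈ Finset.range (i+1), E2 n) - a1 * (macC p1 p2 E1 E2 a1 a2 i).1
         then ((∑ n ∈ Finset.range (i+1), p2 n) + (macC p1 p2 E1 E2 a1 a2 i).2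
              - (∑ n ∈ Finset.range (i+1), E2 n) - a1 * (macC p1 p2 E1 E2 a1 a2 i).1) / a1
         else 0),
       (macC p1 p2 E1 E2 a1 a2 i).2 +
        (if 0 < (∑ n ∈ Finset.range (i+1), p1 n) + (macC p1 p2 E1 E2 a1 a2 i).1
              - (∑ n ∈ Finset.range (i+1), E1 n) - a2 * (macC p1 p2 E1 E2 a1 a2 i).2
         then ((∑ n ∈ Finset.range (i+1), p1 n) + (macC p1 p2 E1 E2 a1 a2 i).1
              - (∑ n ∈ Finset.range (i+1), E1 n) - a2 * (macC p1 p2 E1 E2 a1 a2 i).2) / a2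
         else 0))

set_option maxHeartbeats 1600000 in
lemma macC_inv (p1 p2 d1 d2 E1 E2 : ℕ → ℝ) (a1 a2 : ℝ) (N : ℕ)
    (ha1 : 0 ≤ a1) (ha1' : a1 ≤ 1) (ha2 : 0 ≤ a2) (ha2' : a2 ≤ 1)
    (hE : ∀ i < N, 0 ≤ E1 i ∧ 0 ≤ E2 i)
    (hpos : ∀ i < N, 0 ≤ p1 i ∧ 0 ≤ p2 i ∧ 0 ≤ d1 i ∧ 0 ≤ d2 i)
    (hfeas : ∀ i < N,
      (∑ n ∈ Finset.range (i+1), p1 n) + (∑ n ∈ Finset.range (i+1), d1 n)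
        ≤ (∑ n ∈ Finset.range (i+1), E1 n) + a2 * (∑ n ∈ Finset.range (i+1), d2 n) ∧
      (∑ n ∈ Finset.range (i+1), p2 n) + (∑ n ∈ Finset.range (i+1), d2 n)
        ≤ (∑ n ∈ Finset.range (i+1), E2 n) + a1 * (∑ n ∈ Finset.range (i+1), d1 n)) :
    ∀ i, i ≤ N →
      (0 ≤ (macC p1 p2 E1 E2 a1 a2 i).1 ∧ 0 ≤ (macC p1 p2 E1 E2 a1 a2 i).2 ∧
       (macC p1 p2 E1 E2 a1 a2 i).1 ≤ ∑ n ∈ Finset.range i, d1 n ∧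
       (macC p1 p2 E1 E2 a1 a2 i).2 ≤ ∑ n ∈ Finset.range i, d2 n) ∧
      (∀ n, n < i →
        (macC p1 p2 E1 E2 a1 a2 n).1 ≤ (macC p1 p2 E1 E2 a1 a2 (n+1)).1 ∧
        (macC p1 p2 E1 E2 a1 a2 n).2 ≤ (macC p1 p2 E1 E2 a1 a2 (n+1)).2 ∧
        a2 * ((macC p1 p2 E1 E2 a1 a2 (n+1)).2 - (macC p1 p2 E1 E2 a1 a2 n).2) ≤ p1 n ∧
        a1 * ((macC p1 p2 E1 E2 a1 a2 (n+1)).1 - (macC p1 p2 E1 E2 a1 a2 n).1) ≤ p2 n ∧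
        (∑ m ∈ Finset.range (n+1), p1 m) + (macC p1 p2 E1 E2 a1 a2 (n+1)).1
          ≤ (∑ m ∈ Finset.range (n+1), E1 m) + a2 * (macC p1 p2 E1 E2 a1 a2 (n+1)).2 ∧
        (∑ m ∈ Finset.range (n+1), p2 m) + (macC p1 p2 E1 E2 a1 a2 (n+1)).2
          ≤ (∑ m ∈ Finset.range (n+1), E2 m) + a1 * (macC p1 p2 E1 E2 a1 a2 (n+1)).1) := by
  intro i
  induction i with
  | zero =>
      intro _
      refine ⟨by simp [macC], ?_⟩
      intro n hn; omega
  | succ i ih =>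
      intro hiN
      have hi : i < N := hiN
      obtain ⟨⟨hc1, hc2, hcd1, hcd2⟩, hslots⟩ := ih (le_of_lt hi)
      set c := macC p1 p2 E1 E2 a1 a2 i with hcdef
      obtain ⟨hp1, hp2, hd1i, hd2i⟩ := hpos i hi
      obtain ⟨hE1i, hE2i⟩ := hE i hi
      obtain ⟨horig1, horig2⟩ := hfeas i hi
      set P1 := ∑ n ∈ Finset.range (i+1), p1 n with hP1
      set P2 := ∑ n ∈ Finset.range (i+1), p2 n with hP2
      set Ee1 := ∑ n ∈ Finset.range (i+1), E1 n with hEe1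
      set Ee2 := ∑ n ∈ Finset.range (i+1), E2 n with hEe2
      set D1 := ∑ n ∈ Finset.range (i+1), d1 n with hD1
      set D2 := ∑ n ∈ Finset.range (i+1), d2 n with hD2
      have hD1r : D1 = (∑ n ∈ Finset.range i, d1 n) + d1 i := Finset.sum_range_succ _ _
      have hD2r : D2 = (∑ n ∈ Finset.range i, d2 n) + d2 i := Finset.sum_range_succ _ _
      have hcD1 : c.1 ≤ D1 := by rw [hD1r]; linarith
      have hcD2 : c.2 ≤ D2 := by rw [hD2r]; linarith
      have ha12 : a1 * a2 ≤ 1 := by nlinarith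
      have hstep : macC p1 p2 E1 E2 a1 a2 (i+1) =
          (c.1 + (if 0 < P2 + c.2 - Ee2 - a1 * c.1 then (P2 + c.2 - Ee2 - a1 * c.1) / a1 else 0),
           c.2 + (if 0 < P1 + c.1 - Ee1 - a2 * c.2 then (P1 + c.1 - Ee1 - a2 * c.2) / a2 else 0)) := by
        rw [macC]
      set def1 := P1 + c.1 - Ee1 - a2 * c.2 with hdef1
      set def2 := P2 + c.2 - Ee2 - a1 * c.1 with hdef2
      clear_value c P1 P2 Ee1 Ee2 D1 D2 def1 def2
      -- bounds via feasibility of previous slot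
      have hbound1 : (∑ n ∈ Finset.range i, p1 n) + c.1 ≤ Ee1 + a2 * c.2 := by
        rcases Nat.eq_zero_or_eq_succ_pred i with h0 | hsucc
        · have hc0 : c = ((0 : ℝ), (0 : ℝ)) := by rw [hcdef, h0]; rfl
          have hE0 : Ee1 = E1 0 := by rw [hEe1, h0]; simp
          rw [hc0, hE0, h0]
          simpa using hE 0 (h0 ▸ hi) |>.1
        · set j := i - 1 with hj
          have hij : i = j + 1 := hsucc
          have hslot := hslots j (by omega)
          have hcj : macC p1 p2 E1 E2 a1 a2 (j+1) = c := by rw [hcdef, hij]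
          rw [hcj] at hslot
          have hfe := hslot.2.2.2.2.1
          have hEsplit : Ee1 = (∑ m ∈ Finset.range (j+1), E1 m) + E1 i := by
            rw [hEe1, hij]; exact Finset.sum_range_succ _ _
          have hPsplit : (∑ n ∈ Finset.range i, p1 n) = ∑ m ∈ Finset.range (j+1), p1 m := by
            rw [hij]
          rw [hPsplit, hEsplit]; linarith
      have hbound2 : (∑ n ∈ Finset.range i, p2 n) + c.2 ≤ Ee2 + a1 * c.1 := by
        rcases Nat.eq_zero_or_eq_succ_pred i with h0 | hsucc
        · have hc0 : c = ((0 : ℝ), (0 : ℝ)) := by rw [hcdef, h0]; rfl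
          have hE0 : Ee2 = E2 0 := by rw [hEe2, h0]; simp
          rw [hc0, hE0, h0]
          simpa using hE 0 (h0 ▸ hi) |>.2
        · set j := i - 1 with hj
          have hij : i = j + 1 := hsucc
          have hslot := hslots j (by omega)
          have hcj : macC p1 p2 E1 E2 a1 a2 (j+1) = c := by rw [hcdef, hij]
          rw [hcj] at hslot
          have hfe := hslot.2.2.2.2.2
          have hEsplit : Ee2 = (∑ m ∈ Finset.range (j+1), E2 m) + E2 i := by
            rw [hEe2, hij]; exact Finset.sum_range_succ _ _
          have hPsplit : (∑ n ∈ Finset.range i, p2 n) = ∑ m ∈ Finset.range (j+1), p2 m := by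
            rw [hij]
          rw [hPsplit, hEsplit]; linarith
      have hP1split : P1 = (∑ n ∈ Finset.range i, p1 n) + p1 i := by rw [hP1]; exact Finset.sum_range_succ _ _
      have hP2split : P2 = (∑ n ∈ Finset.range i, p2 n) + p2 i := by rw [hP2]; exact Finset.sum_range_succ _ _
      have ha2pos : 0 < def1 → 0 < a2 := by
        intro h
        rcases ha2.lt_or_eq with h' | h'
        · exact h'
        · exfalso
          rw [hdef1, ← h'] at h
          rw [← h'] at horig1
          simp only [zero_mul, sub_zero, add_zero] at h horig1
          linarith
      have ha1pos : 0 < def2 → 0 < a1 := by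
        intro h
        rcases ha1.lt_or_eq with h' | h'
        · exact h'
        · exfalso
          rw [hdef2, ← h'] at h
          rw [← h'] at horig2
          simp only [zero_mul, sub_zero, add_zero] at h horig2
          linarith
      have hK2 : ¬ (0 < def1 ∧ 0 < def2) := by
        rintro ⟨hx1, hx2⟩
        rw [hdef1] at hx1
        have t1 : 0 ≤ a2 * def2 := mul_nonneg ha2 hx2.le
        rw [hdef2] at t1
        have t2 := mul_le_mul_of_nonneg_left horig2 ha2
        have t3 : 0 ≤ (1 - a1 * a2) * (D1 - c.1) :=
          mul_nonneg (by linarith) (by linarith)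
        nlinarith [horig1, t1, t2, t3, hx1]
      by_cases hd1 : 0 < def1
      · -- node 1 has a deficit
        have hd2 : ¬ 0 < def2 := fun h => hK2 ⟨hd1, h⟩
        have ha2p := ha2pos hd1
        have hstep' : macC p1 p2 E1 E2 a1 a2 (i+1) = (c.1, c.2 + def1 / a2) := by
          rw [hstep, if_pos hd1, if_neg hd2, add_zero]
        clear hstep
        have hdiv : a2 * (def1 / a2) = def1 := by field_simp
        have hdivnn : 0 ≤ def1 / a2 := div_nonneg hd1.le ha2p.le
        have hslotI :
            (macC p1 p2 E1 E2 a1 a2 i).1 ≤ (macC p1 p2 E1 E2 a1 a2 (i+1)).1 ∧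
            (macC p1 p2 E1 E2 a1 a2 i).2 ≤ (macC p1 p2 E1 E2 a1 a2 (i+1)).2 ∧
            a2 * ((macC p1 p2 E1 E2 a1 a2 (i+1)).2 - (macC p1 p2 E1 E2 a1 a2 i).2) ≤ p1 i ∧
            a1 * ((macC p1 p2 E1 E2 a1 a2 (i+1)).1 - (macC p1 p2 E1 E2 a1 a2 i).1) ≤ p2 i ∧
            (∑ m ∈ Finset.range (i+1), p1 m) + (macC p1 p2 E1 E2 a1 a2 (i+1)).1
              ≤ (∑ m ∈ Finset.range (i+1), E1 m) + a2 * (macC p1 p2 E1 E2 a1 a2 (i+1)).2 ∧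
            (∑ m ∈ Finset.range (i+1), p2 m) + (macC p1 p2 E1 E2 a1 a2 (i+1)).2
              ≤ (∑ m ∈ Finset.range (i+1), E2 m) + a1 * (macC p1 p2 E1 E2 a1 a2 (i+1)).1 := by
          rw [hstep', ← hcdef]
          refine ⟨le_refl _, by linarith, ?_, by simpa using hp2, ?_, ?_⟩
          · rw [add_sub_cancel_left, hdiv, hdef1, hP1split]
            linarith
          · rw [mul_add, hdiv, hdef1]
            linarith
          · have key : a2 * (P2 + (c.2 + def1 / a2)) ≤ a2 * (Ee2 + a1 * c.1) := by
              rw [mul_add, mul_add, hdiv, hdef1]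
              have t2 := mul_le_mul_of_nonneg_left horig2 ha2
              have t3 : 0 ≤ (1 - a1 * a2) * (D1 - c.1) :=
                mul_nonneg (by linarith) (by linarith)
              nlinarith [horig1, t2, t3]
            rw [← hP2, ← hEe2]
            exact le_of_mul_le_mul_left key ha2p
        rw [hstep']
        refine ⟨⟨hc1, by positivity, hcD1, ?_⟩, ?_⟩
        · have key : a2 * (c.2 + def1 / a2) ≤ a2 * D2 := by
            rw [mul_add, hdiv, hdef1]
            linarith
          exact le_of_mul_le_mul_left key ha2p
        · intro n hn
          rcases Nat.lt_succ_iff_lt_or_eq.mp hn with h | h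
          · exact hslots n h
          · exact h ▸ hslotI
      · by_cases hd2 : 0 < def2
        · -- node 2 has a deficit
          have ha1p := ha1pos hd2
          have hstep' : macC p1 p2 E1 E2 a1 a2 (i+1) = (c.1 + def2 / a1, c.2) := by
            rw [hstep, if_pos hd2, if_neg hd1, add_zero]
          clear hstep
          have hdiv : a1 * (def2 / a1) = def2 := by field_simp
          have hdivnn : 0 ≤ def2 / a1 := div_nonneg hd2.le ha1p.le
          have hslotI :
              (macC p1 p2 E1 E2 a1 a2 i).1 ≤ (macC p1 p2 E1 E2 a1 a2 (i+1)).1 ∧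
              (macC p1 p2 E1 E2 a1 a2 i).2 ≤ (macC p1 p2 E1 E2 a1 a2 (i+1)).2 ∧
              a2 * ((macC p1 p2 E1 E2 a1 a2 (i+1)).2 - (macC p1 p2 E1 E2 a1 a2 i).2) ≤ p1 i ∧
              a1 * ((macC p1 p2 E1 E2 a1 a2 (i+1)).1 - (macC p1 p2 E1 E2 a1 a2 i).1) ≤ p2 i ∧
              (∑ m ∈ Finset.range (i+1), p1 m) + (macC p1 p2 E1 E2 a1 a2 (i+1)).1
                ≤ (∑ m ∈ Finset.range (i+1), E1 m) + a2 * (macC p1 p2 E1 E2 a1 a2 (i+1)).2 ∧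
              (∑ m ∈ Finset.range (i+1), p2 m) + (macC p1 p2 E1 E2 a1 a2 (i+1)).2
                ≤ (∑ m ∈ Finset.range (i+1), E2 m) + a1 * (macC p1 p2 E1 E2 a1 a2 (i+1)).1 := by
            rw [hstep', ← hcdef]
            refine ⟨by linarith, le_refl _, by simpa using hp1, ?_, ?_, ?_⟩
            · rw [add_sub_cancel_left, hdiv, hdef2, hP2split]
              linarith
            · have key : a1 * (P1 + (c.1 + def2 / a1)) ≤ a1 * (Ee1 + a2 * c.2) := by
                rw [mul_add, mul_add, hdiv, hdef2]
                have t2 := mul_le_mul_of_nonneg_left horig1 ha1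
                have t3 : 0 ≤ (1 - a1 * a2) * (D2 - c.2) :=
                  mul_nonneg (by linarith) (by linarith)
                nlinarith [horig2, t2, t3]
              rw [← hP1, ← hEe1]
              exact le_of_mul_le_mul_left key ha1p
            · rw [mul_add, hdiv, hdef2]
              linarith
          rw [hstep']
          refine ⟨⟨by positivity, hc2, ?_, hcD2⟩, ?_⟩
          · have key : a1 * (c.1 + def2 / a1) ≤ a1 * D1 := by
              rw [mul_add, hdiv, hdef2]
              linarith
            exact le_of_mul_le_mul_left key ha1p
          · intro n hn
            rcases Nat.lt_succ_iff_lt_or_eq.mp hn with h | h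
            · exact hslots n h
            · exact h ▸ hslotI
        · -- no deficits
          have hstep' : macC p1 p2 E1 E2 a1 a2 (i+1) = (c.1, c.2) := by
            rw [hstep, if_neg hd1, if_neg hd2, add_zero, add_zero]
          clear hstep
          push_neg at hd1 hd2
          have hslotI :
              (macC p1 p2 E1 E2 a1 a2 i).1 ≤ (macC p1 p2 E1 E2 a1 a2 (i+1)).1 ∧
              (macC p1 p2 E1 E2 a1 a2 i).2 ≤ (macC p1 p2 E1 E2 a1 a2 (i+1)).2 ∧
              a2 * ((macC p1 p2 E1 E2 a1 a2 (i+1)).2 - (macC p1 p2 E1 E2 a1 a2 i).2) ≤ p1 i ∧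
              a1 * ((macC p1 p2 E1 E2 a1 a2 (i+1)).1 - (macC p1 p2 E1 E2 a1 a2 i).1) ≤ p2 i ∧
              (∑ m ∈ Finset.range (i+1), p1 m) + (macC p1 p2 E1 E2 a1 a2 (i+1)).1
                ≤ (∑ m ∈ Finset.range (i+1), E1 m) + a2 * (macC p1 p2 E1 E2 a1 a2 (i+1)).2 ∧
              (∑ m ∈ Finset.range (i+1), p2 m) + (macC p1 p2 E1 E2 a1 a2 (i+1)).2
                ≤ (∑ m ∈ Finset.range (i+1), E2 m) + a1 * (macC p1 p2 E1 E2 a1 a2 (i+1)).1 := by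
            rw [hstep', ← hcdef]
            refine ⟨le_refl _, le_refl _, by simpa using hp1, by simpa using hp2, ?_, ?_⟩
            · rw [hdef1] at hd1; linarith
            · rw [hdef2] at hd2; linarith
          rw [hstep']
          refine ⟨⟨hc1, hc2, hcD1, hcD2⟩, ?_⟩
          intro n hn
          rcases Nat.lt_succ_iff_lt_or_eq.mp hn with h | h
          · exact hslots n h
          · exact h ▸ hslotI

/-- For the energy harvesting multiple access channel with
infinite batteries, the optimal sum-throughput over feasible policies equals
that over feasible procrastinating policies. -/

theorem stmt_17
    (N : ℕ) (E1 E2 : ℕ → ℝ) (h1 h2 s1 s2 a1 a2 : ℝ)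
    (hh1 : 0 < h1) (hh2 : 0 < h2) (hs1 : 0 < s1) (hs2 : 0 < s2)
    (ha1 : a1 ∈ Set.Icc (0:ℝ) 1) (ha2 : a2 ∈ Set.Icc (0:ℝ) 1)
    (hE : ∀ i < N, 0 ≤ E1 i ∧ 0 ≤ E2 i) :
    sSup {t : ℝ | ∃ p1 p2 d1 d2 : ℕ → ℝ,
        (∀ i < N, 0 ≤ p1 i ∧ 0 ≤ p2 i ∧ 0 ≤ d1 i ∧ 0 ≤ d2 i) ∧
        (∀ i < N,
          0 ≤ ∑ n ∈ Finset.range (i+1), (E1 n - p1 n + a2 * d2 n - d1 n) ∧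
          0 ≤ ∑ n ∈ Finset.range (i+1), (E2 n - p2 n + a1 * d1 n - d2 n)) ∧
        t = ∑ i ∈ Finset.range N,
          1/2 * Real.log (1 + (h1 / s2) * p1 i + (h2 / s1) * p2 i)}
    = sSup {t : ℝ | ∃ p1 p2 d1 d2 : ℕ → ℝ,
        (∀ i < N, 0 ≤ p1 i ∧ 0 ≤ p2 i ∧ 0 ≤ d1 i ∧ 0 ≤ d2 i) ∧
        (∀ i < N,
          0 ≤ ∑ n ∈ Finset.range (i+1), (E1 n - p1 n + a2 * d2 n - d1 n) ∧
          0 ≤ ∑ n ∈ Finset.range (i+1), (E2 n - p2 n + a1 * d1 n - d2 n)) ∧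
        (∀ i < N, 0 ≤ p1 i - a2 * d2 i ∧ 0 ≤ p2 i - a1 * d1 i) ∧
        t = ∑ i ∈ Finset.range N,
          1/2 * Real.log (1 + (h1 / s2) * p1 i + (h2 / s1) * p2 i)} := by
  obtain ⟨ha1n, ha1'⟩ := ha1
  obtain ⟨ha2n, ha2'⟩ := ha2
  congr 1
  ext t
  simp only [Set.mem_setOf_eq]
  constructor
  · rintro ⟨p1, p2, d1, d2, hpos, hfeas, ht⟩
    have hfeas' : ∀ i < N,
        (∑ n ∈ Finset.range (i+1), p1 n) + (∑ n ∈ Finset.range (i+1), d1 n)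
          ≤ (∑ n ∈ Finset.range (i+1), E1 n) + a2 * (∑ n ∈ Finset.range (i+1), d2 n) ∧
        (∑ n ∈ Finset.range (i+1), p2 n) + (∑ n ∈ Finset.range (i+1), d2 n)
          ≤ (∑ n ∈ Finset.range (i+1), E2 n) + a1 * (∑ n ∈ Finset.range (i+1), d1 n) := by
      intro i hi
      obtain ⟨hf1, hf2⟩ := hfeas i hi
      rw [macSum] at hf1 hf2
      constructor <;> linarith
    have inv := macC_inv p1 p2 d1 d2 E1 E2 a1 a2 N ha1n ha1' ha2n ha2' hE hpos hfeas' N le_rfl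
    set C := macC p1 p2 E1 E2 a1 a2 with hC
    have hC0 : C 0 = (0, 0) := rfl
    refine ⟨p1, p2, fun n => (C (n+1)).1 - (C n).1, fun n => (C (n+1)).2 - (C n).2,
      ?_, ?_, ?_, ht⟩
    · intro i hi
      obtain ⟨hm1, hm2, _, _, _, _⟩ := inv.2 i hi
      refine ⟨(hpos i hi).1, (hpos i hi).2.1, ?_, ?_⟩
      · show (0:ℝ) ≤ (C (i+1)).1 - (C i).1
        linarith
      · show (0:ℝ) ≤ (C (i+1)).2 - (C i).2
        linarith
    · intro i hi
      obtain ⟨_, _, _, _, hf1, hf2⟩ := inv.2 i hi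
      have tel1 : ∑ n ∈ Finset.range (i+1), ((C (n+1)).1 - (C n).1) = (C (i+1)).1 - (C 0).1 :=
        Finset.sum_range_sub (fun n => (C n).1) (i+1)
      have tel2 : ∑ n ∈ Finset.range (i+1), ((C (n+1)).2 - (C n).2) = (C (i+1)).2 - (C 0).2 :=
        Finset.sum_range_sub (fun n => (C n).2) (i+1)
      rw [hC0] at tel1 tel2
      simp only at tel1 tel2
      constructor
      · rw [macSum, tel1, tel2]
        linarith
      · rw [macSum, tel1, tel2]
        linarith
    · intro i hi
      obtain ⟨_, _, hpr1, hpr2, _, _⟩ := inv.2 i hi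
      constructor
      · show (0:ℝ) ≤ p1 i - a2 * ((C (i+1)).2 - (C i).2)
        linarith
      · show (0:ℝ) ≤ p2 i - a1 * ((C (i+1)).1 - (C i).1)
        linarith
  · rintro ⟨p1, p2, d1, d2, hpos, hfeas, _, ht⟩
    exact ⟨p1, p2, d1, d2, hpos, hfeas, ht⟩
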